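/- Let (X,T), (Y,S) be minimal systems and φ : (X,T) → (Z,R) a factor map onto a minimal system. If X is quasi-disjoint from Y, then Z is quasi-disjoint from Y. -/

import Mathlib

open Filter Topology Set

/-- A map between topological spaces is *semiopen* if the image of every
nonempty open set has nonempty interior. -/
def SemiOpen {X Y : Type*} [TopologicalSpace X] [TopologicalSpace Y] (f : X → Y) : Prop :=
  ∀ U : Set X, IsOpen U → U.Nonempty → (interior (f '' U)).Nonempty

/-- The `n`-th iterate (`n : ℤ`) of a homeomorphism. -/
def zIter {X : Type*} [TopologicalSpace X] (T : X ≃ₜ X) (n : ℤ) : X → X :=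
  fun x => (T.toEquiv ^ n) x

/-- The two-sided orbit of a point under a homeomorphism. -/
def zOrbit {X : Type*} [TopologicalSpace X] (T : X ≃ₜ X) (x : X) : Set X :=
  Set.range fun n : ℤ => zIter T n x

/-- A system is minimal if every orbit is dense. -/
def IsMinimalSystem {X : Type*} [TopologicalSpace X] (T : X ≃ₜ X) : Prop :=
  ∀ x : X, Dense (zOrbit T x)

/-- A minimal subset: nonempty, closed, invariant, with no proper nonempty
closed invariant subset. -/
def IsMinimalSubset {X : Type*} [TopologicalSpace X] (T : X ≃ₜ X) (M : Set X) : Prop :=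
  M.Nonempty ∧ IsClosed M ∧ T '' M = M ∧
    ∀ M' ⊆ M, M'.Nonempty → IsClosed M' → T '' M' = M' → M' = M

/-- A factor map between systems. -/
def IsFactorMap {X Y : Type*} [TopologicalSpace X] [TopologicalSpace Y]
    (T : X ≃ₜ X) (S : Y ≃ₜ Y) (f : X → Y) : Prop :=
  Continuous f ∧ Function.Surjective f ∧ ∀ x, f (T x) = S (f x)

/-- The regionally proximal relation. -/
def RP {X : Type*} [MetricSpace X] (T : X ≃ₜ X) : Set (X × X) :=
  {p | ∃ (u v : ℕ → X) (n : ℕ → ℤ),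
    Tendsto u atTop (𝓝 p.1) ∧ Tendsto v atTop (𝓝 p.2) ∧
    Tendsto (fun i => dist (zIter T (n i) (u i)) (zIter T (n i) (v i))) atTop (𝓝 0)}

/-- A joining of two systems: a closed invariant subset of the product with
full projections onto both coordinates. -/
def IsJoining {X Y : Type*} [TopologicalSpace X] [TopologicalSpace Y]
    (T : X ≃ₜ X) (S : Y ≃ₜ Y) (J : Set (X × Y)) : Prop :=
  IsClosed J ∧ (T.prodCongr S) '' J = J ∧
    Prod.fst '' J = Set.univ ∧ Prod.snd '' J = Set.univ

/-- `J` projects onto `X_eq × Y_eq`: phrased via the regionally proximal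
relation, every product of RP-cells meets `J`. -/
def FullEqProjection {X Y : Type*} [MetricSpace X] [MetricSpace Y]
    (T : X ≃ₜ X) (S : Y ≃ₜ Y) (J : Set (X × Y)) : Prop :=
  ∀ x : X, ∀ y : Y, ∃ p ∈ J, (x, p.1) ∈ RP T ∧ (y, p.2) ∈ RP S

/-- Two minimal systems are quasi-disjoint if the full product is the only
joining projecting onto the product of the maximal equicontinuous factors. -/
def QuasiDisjoint {X Y : Type*} [MetricSpace X] [MetricSpace Y]
    (T : X ≃ₜ X) (S : Y ≃ₜ Y) : Prop :=
  ∀ J : Set (X × Y), IsJoining T S J → FullEqProjection T S J → J = Set.univ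

/-- Two systems are disjoint if the full product is the only joining. -/
def DisjointSystems {X Y : Type*} [TopologicalSpace X] [TopologicalSpace Y]
    (T : X ≃ₜ X) (S : Y ≃ₜ Y) : Prop :=
  ∀ J : Set (X × Y), IsJoining T S J → J = Set.univ

/-- A system is equicontinuous (with respect to all integer iterates). -/
def EquicontinuousSystem {X : Type*} [MetricSpace X] (T : X ≃ₜ X) : Prop :=
  ∀ ε > (0 : ℝ), ∃ δ > (0 : ℝ), ∀ x₁ x₂ : X, dist x₁ x₂ < δ →
    ∀ n : ℤ, dist (zIter T n x₁) (zIter T n x₂) < ε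

/-- A pair of points is proximal. -/
def ProximalPair {X : Type*} [MetricSpace X] (T : X ≃ₜ X) (x₁ x₂ : X) : Prop :=
  ∀ ε > (0 : ℝ), ∃ n : ℤ, dist (zIter T n x₁) (zIter T n x₂) < ε

/-!
Pull a joining `J` of `Z` and `Y` back along `φ × id`. The pullback is a joining of `X` and `Y`,
so by quasi-disjointness it is everything, hence so is `J`, as soon as it projects onto
`X_eq × Y_eq`. That reduces to the lifting property of the regionally proximal relation, which we
only need at one point `a` of `X`: the set of points whose RP-cells meet the pullback is closed
and invariant, so it is enough to fill the slice `{a} × Y`, whose orbit is dense. Taking `φ a` to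
be a continuity point of the fibre map `ζ ↦ φ⁻¹ ζ` (these are residual by Baire), RP-pairs lift
at `a` by a compactness argument.
-/

open Metric

section Iterates

variable {X : Type*} [TopologicalSpace X] (T : X ≃ₜ X)

lemma zIter_eq_coe_zpow (n : ℤ) : zIter T n = ⇑(T ^ n) := by
  let toPerm : (X ≃ₜ X) →* Equiv.Perm X := ⟨⟨Homeomorph.toEquiv, rfl⟩, fun _ _ => rfl⟩
  exact congrArg DFunLike.coe (map_zpow toPerm T n).symm

lemma continuous_zIter (n : ℤ) : Continuous (zIter T n) := by
  rw [zIter_eq_coe_zpow]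
  exact (T ^ n).continuous

lemma zIter_add (m n : ℤ) (x : X) : zIter T (m + n) x = zIter T m (zIter T n x) := by
  simp only [zIter_eq_coe_zpow, zpow_add, Homeomorph.mul_apply]

lemma zIter_neg_self (n : ℤ) (x : X) : zIter T (-n) (zIter T n x) = x := by
  rw [← zIter_add, neg_add_cancel]
  rfl

lemma zIter_semiconj {Z : Type*} [TopologicalSpace Z] (R : Z ≃ₜ Z) {φ : X → Z}
    (h : ∀ x, φ (T x) = R (φ x)) (n : ℤ) (x : X) : φ (zIter T n x) = zIter R n (φ x) := by
  have h_symm (x : X) : φ (T.symm x) = R.symm (φ x) := by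
    simpa using congrArg R.symm (h (T.symm x)).symm
  simp only [zIter_eq_coe_zpow]
  induction n using Int.induction_on generalizing x with
  | zero => rfl
  | succ k ih => simp only [zpow_add_one, Homeomorph.mul_apply, h, ih]
  | pred k ih => simp only [zpow_sub_one, Homeomorph.mul_apply, Homeomorph.inv_apply, h_symm, ih]

lemma zIter_mem_of_image_eq {A : Set X} (hA : T '' A = A) (n : ℤ) {x : X} (hx : x ∈ A) :
    zIter T n x ∈ A := by
  have h_symm : ∀ x ∈ A, T.symm x ∈ A := by
    intro x hx
    rw [← hA] at hx
    obtain ⟨y, hy, rfl⟩ := hx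
    simpa using hy
  rw [zIter_eq_coe_zpow]
  induction n using Int.induction_on generalizing x with
  | zero => exact hx
  | succ k ih =>
    rw [zpow_add_one, Homeomorph.mul_apply]
    exact ih (hA ▸ mem_image_of_mem T hx)
  | pred k ih =>
    rw [zpow_sub_one, Homeomorph.mul_apply]
    exact ih (h_symm x hx)

lemma zIter_prodCongr {Y : Type*} [TopologicalSpace Y] (S : Y ≃ₜ Y) (n : ℤ) (p : X × Y) :
    zIter (T.prodCongr S) n p = (zIter T n p.1, zIter S n p.2) :=
  Prod.ext (zIter_semiconj _ T (φ := Prod.fst) (fun _ => rfl) n p)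
    (zIter_semiconj _ S (φ := Prod.snd) (fun _ => rfl) n p)

end Iterates

lemma tendsto_of_dist_lt_one_div_succ {X : Type*} [PseudoMetricSpace X] {u : ℕ → X} {a : X}
    (h : ∀ k : ℕ, dist (u k) a < 1 / ((k : ℝ) + 1)) : Tendsto u atTop (𝓝 a) :=
  tendsto_iff_dist_tendsto_zero.2 <| squeeze_zero (fun _ => dist_nonneg) (fun k => (h k).le)
    tendsto_one_div_add_atTop_nhds_zero_nat

section RegionallyProximal

variable {X : Type*} [MetricSpace X] (T : X ≃ₜ X)

lemma RP_eq_iInter_closure :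
    RP T = ⋂ (ε : ℝ) (_ : 0 < ε),
      closure {p : X × X | ∃ n, dist (zIter T n p.1) (zIter T n p.2) < ε} := by
  ext p
  simp only [mem_iInter]
  constructor
  · rintro ⟨u, v, n, hu, hv, huv⟩ ε hε
    exact mem_closure_of_tendsto (hu.prodMk_nhds hv)
      ((huv.eventually (gt_mem_nhds hε)).mono fun i hi => ⟨n i, hi⟩)
  · intro hp
    have h_approx (k : ℕ) : ∃ (q : X × X) (n : ℤ),
        dist (zIter T n q.1) (zIter T n q.2) < 1 / ((k : ℝ) + 1) ∧
          dist q.1 p.1 < 1 / ((k : ℝ) + 1) ∧ dist q.2 p.2 < 1 / ((k : ℝ) + 1) := by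
      obtain ⟨q, ⟨n, hn⟩, hpq⟩ :=
        mem_closure_iff.1 (hp _ Nat.one_div_pos_of_nat) _ Nat.one_div_pos_of_nat
      rw [dist_comm, Prod.dist_eq, max_lt_iff] at hpq
      exact ⟨q, n, hn, hpq⟩
    choose q n hn hq₁ hq₂ using h_approx
    exact ⟨_, _, n, tendsto_of_dist_lt_one_div_succ hq₁, tendsto_of_dist_lt_one_div_succ hq₂,
      squeeze_zero (fun _ => dist_nonneg) (fun k => (hn k).le)
        tendsto_one_div_add_atTop_nhds_zero_nat⟩

lemma isClosed_RP : IsClosed (RP T) := by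
  rw [RP_eq_iInter_closure]
  exact isClosed_biInter fun _ _ => isClosed_closure

lemma zIter_mem_RP {a b : X} (h : (a, b) ∈ RP T) (k : ℤ) :
    (zIter T k a, zIter T k b) ∈ RP T := by
  obtain ⟨u, v, n, hu, hv, huv⟩ := h
  refine ⟨fun i => zIter T k (u i), fun i => zIter T k (v i), fun i => n i - k,
    ((continuous_zIter T k).tendsto a).comp hu, ((continuous_zIter T k).tendsto b).comp hv, ?_⟩
  simpa only [← zIter_add, sub_add_cancel] using huv

end RegionallyProximal

section MinimalCompact

variable {X : Type*} [MetricSpace X] [CompactSpace X] (T : X ≃ₜ X)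

lemma exists_finset_zIter_mem_ball (hT : IsMinimalSystem T) (x₀ : X) {ε : ℝ} (hε : 0 < ε) :
    ∃ F : Finset ℤ, ∀ x, ∃ m ∈ F, zIter T m x ∈ ball x₀ ε := by
  have h_cover : univ ⊆ ⋃ m : ℤ, zIter T m ⁻¹' ball x₀ ε := fun x _ => by
    obtain ⟨_, ⟨m, rfl⟩, hm⟩ :=
      (hT x).exists_mem_open isOpen_ball ⟨x₀, mem_ball_self hε⟩
    exact mem_iUnion.2 ⟨m, hm⟩
  obtain ⟨F, hF⟩ := isCompact_univ.elim_finite_subcover _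
    (fun m => isOpen_ball.preimage (continuous_zIter T m)) h_cover
  exact ⟨F, fun x => by simpa using hF (mem_univ x)⟩

lemma exists_pos_forall_finset_dist_zIter_lt (F : Finset ℤ) {ε : ℝ} (hε : 0 < ε) :
    ∃ δ > 0, ∀ x y : X, dist x y < δ → ∀ m ∈ F, dist (zIter T m x) (zIter T m y) < ε := by
  have h_unif : ∀ᶠ p in uniformity X, ∀ m ∈ F, dist (zIter T m p.1) (zIter T m p.2) < ε :=
    (eventually_all_finset F).2 fun m _ =>
      CompactSpace.uniformContinuous_of_continuous (continuous_zIter T m)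
        (dist_mem_uniformity hε)
  obtain ⟨δ, hδ, h⟩ := mem_uniformity_dist.1 h_unif
  exact ⟨δ, hδ, fun x y hxy => h hxy⟩

lemma exists_zIter_near_of_mem_RP (hT : IsMinimalSystem T) {a b : X} (hab : (a, b) ∈ RP T)
    (x₀ : X) {ε : ℝ} (hε : 0 < ε) :
    ∃ (u v : X) (n : ℤ), dist u a < ε ∧ dist v b < ε ∧
      dist (zIter T n u) x₀ < ε ∧ dist (zIter T n v) x₀ < ε := by
  obtain ⟨F, hF⟩ := exists_finset_zIter_mem_ball T hT x₀ (half_pos hε)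
  obtain ⟨δ, hδ, hFδ⟩ := exists_pos_forall_finset_dist_zIter_lt T F (half_pos hε)
  obtain ⟨u, v, n, hu, hv, huv⟩ := hab
  obtain ⟨i, hui, hvi, huvi⟩ := ((tendsto_nhds.1 hu ε hε).and
    ((tendsto_nhds.1 hv ε hε).and (huv.eventually (gt_mem_nhds hδ)))).exists
  obtain ⟨m, hmF, hm⟩ := hF (zIter T (n i) (u i))
  have hm' := hFδ _ _ huvi m hmF
  rw [mem_ball] at hm
  refine ⟨u i, v i, m + n i, hui, hvi, ?_, ?_⟩ <;> rw [zIter_add]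
  · linarith
  · linarith [dist_triangle (zIter T m (zIter T (n i) (v i))) (zIter T m (zIter T (n i) (u i))) x₀,
      dist_comm (zIter T m (zIter T (n i) (u i))) (zIter T m (zIter T (n i) (v i)))]

lemma exists_seq_zIter_tendsto_of_mem_RP (hT : IsMinimalSystem T) {a b : X}
    (hab : (a, b) ∈ RP T) (x₀ : X) :
    ∃ (u v : ℕ → X) (n : ℕ → ℤ), Tendsto u atTop (𝓝 a) ∧ Tendsto v atTop (𝓝 b) ∧
      Tendsto (fun k => zIter T (n k) (u k)) atTop (𝓝 x₀) ∧
      Tendsto (fun k => zIter T (n k) (v k)) atTop (𝓝 x₀) := by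
  choose u v n hu hv hun hvn using fun k : ℕ =>
    exists_zIter_near_of_mem_RP T hT hab x₀ (Nat.one_div_pos_of_nat (n := k))
  exact ⟨u, v, n, tendsto_of_dist_lt_one_div_succ hu, tendsto_of_dist_lt_one_div_succ hv,
    tendsto_of_dist_lt_one_div_succ hun, tendsto_of_dist_lt_one_div_succ hvn⟩

end MinimalCompact

lemma LowerSemicontinuous.eventually_residual_continuousAt {Z : Type*} [TopologicalSpace Z]
    {f : Z → ℝ} (hf : LowerSemicontinuous f) : ∀ᶠ z in residual Z, ContinuousAt f z := by
  have h_frontier (q : ℚ) : ∀ᶠ z in residual Z, z ∉ frontier (f ⁻¹' Iic (q : ℝ)) :=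
    residual_of_dense_open isClosed_frontier.isOpen_compl
      (interior_eq_empty_iff_dense_compl.1 (interior_frontier (hf.isClosed_preimage q)))
  filter_upwards [eventually_countable_forall.2 h_frontier] with z hz
  refine continuousAt_iff_lower_upperSemicontinuousAt.2 ⟨hf.lowerSemicontinuousAt z, fun y hy => ?_⟩
  obtain ⟨q, hzq, hqy⟩ := exists_rat_btwn hy
  have hz_int : z ∈ interior (f ⁻¹' Iic (q : ℝ)) := by
    by_contra h
    exact hz q ⟨subset_closure hzq.le, h⟩
  filter_upwards [mem_interior_iff_mem_nhds.1 hz_int] with ζ hζ using lt_of_le_of_lt hζ hqy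

section FiberContinuity

variable {X Z : Type*} [MetricSpace X] [MetricSpace Z]

/-- For compact `X` this is continuity at `z` of `ζ ↦ φ ⁻¹' {ζ}` in the Hausdorff metric. -/
def IsFiberContinuityPoint (φ : X → Z) (z : Z) : Prop :=
  ∀ x, ContinuousAt (fun ζ => infDist x (φ ⁻¹' {ζ})) z

variable [CompactSpace X] {φ : X → Z}

lemma exists_mem_fiber_dist_eq_infDist (hc : Continuous φ) (hs : Function.Surjective φ)
    (x : X) (ζ : Z) : ∃ x', φ x' = ζ ∧ dist x x' = infDist x (φ ⁻¹' {ζ}) := by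
  obtain ⟨x', hx', h⟩ :=
    (isClosed_singleton.preimage hc).isCompact.exists_infDist_eq_dist (hs ζ) x
  exact ⟨x', hx', h.symm⟩

lemma lowerSemicontinuous_infDist_fiber (hc : Continuous φ) (hs : Function.Surjective φ)
    (x : X) : LowerSemicontinuous fun ζ => infDist x (φ ⁻¹' {ζ}) := by
  refine lowerSemicontinuous_iff_isClosed_preimage.2 fun q => ?_
  have h_sublevel : (fun ζ => infDist x (φ ⁻¹' {ζ})) ⁻¹' Iic q = φ '' closedBall x q := by
    ext ζ
    constructor
    · intro h
      obtain ⟨x', rfl, hx'⟩ := exists_mem_fiber_dist_eq_infDist hc hs x ζ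
      exact ⟨x', mem_closedBall'.2 (hx' ▸ h), rfl⟩
    · rintro ⟨x', hx', rfl⟩
      show infDist x (φ ⁻¹' {φ x'}) ≤ q
      exact (infDist_le_dist_of_mem (show x' ∈ φ ⁻¹' {φ x'} from rfl)).trans (mem_closedBall'.1 hx')
  rw [h_sublevel]
  exact (isClosed_closedBall.isCompact.image hc).isClosed

/-- The fibre distances of a countable dense set of points are continuous off a meagre set, and
`x ↦ infDist x s` is `1`-Lipschitz. -/
lemma eventually_residual_isFiberContinuityPoint (hc : Continuous φ)
    (hs : Function.Surjective φ) : ∀ᶠ z in residual Z, IsFiberContinuityPoint φ z := by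
  obtain ⟨D, hD_countable, hD_dense⟩ := TopologicalSpace.exists_countable_dense X
  filter_upwards [(eventually_countable_ball hD_countable).2 fun x _ =>
    (lowerSemicontinuous_infDist_fiber hc hs x).eventually_residual_continuousAt] with z hz x
  refine continuousAt_of_locally_uniform_approx_of_continuousAt fun U hU => ?_
  obtain ⟨ε, hε, hεU⟩ := mem_uniformity_dist.1 hU
  obtain ⟨x', hx'D, hxx'⟩ := mem_closure_iff.1 (hD_dense x) ε hε
  refine ⟨univ, univ_mem, _, hz x' hx'D, fun ζ _ => hεU ?_⟩
  calc dist (infDist x (φ ⁻¹' {ζ})) (infDist x' (φ ⁻¹' {ζ})) ≤ dist x x' := by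
        simpa using (lipschitz_infDist_pt (φ ⁻¹' {ζ})).dist_le_mul x x'
    _ < ε := hxx'

lemma IsFiberContinuityPoint.exists_seq_tendsto {z : Z} (hz : IsFiberContinuityPoint φ z)
    (hc : Continuous φ) (hs : Function.Surjective φ) {x : X} (hx : φ x = z) {g : ℕ → Z}
    (hg : Tendsto g atTop (𝓝 z)) :
    ∃ x' : ℕ → X, (∀ k, φ (x' k) = g k) ∧ Tendsto x' atTop (𝓝 x) := by
  choose x' hx'φ hx'x using fun k => exists_mem_fiber_dist_eq_infDist hc hs x (g k)
  have h_lim := (hz x).tendsto.comp hg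
  rw [infDist_zero_of_mem (s := φ ⁻¹' {z}) hx] at h_lim
  refine ⟨x', hx'φ, tendsto_iff_dist_tendsto_zero.2 ?_⟩
  simpa only [dist_comm (x' _), hx'x, Function.comp_def] using h_lim

end FiberContinuity

section Lifting

variable {X Z : Type*} [MetricSpace X] [CompactSpace X] [MetricSpace Z] [CompactSpace Z]
  {T : X ≃ₜ X} {R : Z ≃ₜ Z} {φ : X → Z}

/-- Push the pair close to `z` itself, where the fibre map is continuous; lift there, and pull
back by the same iterate. -/
theorem exists_lift_mem_RP (hR : IsMinimalSystem R) (hφ : IsFactorMap T R φ) {z w : Z}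
    (hz : IsFiberContinuityPoint φ z) (hzw : (z, w) ∈ RP R) {a : X} (ha : φ a = z) :
    ∃ x, φ x = w ∧ (a, x) ∈ RP T := by
  obtain ⟨hc, hs, hφT⟩ := hφ
  obtain ⟨u, v, n, hu, hv, hun, hvn⟩ := exists_seq_zIter_tendsto_of_mem_RP R hR hzw z
  obtain ⟨a', ha'φ, ha'⟩ := hz.exists_seq_tendsto hc hs ha hu
  obtain ⟨c, -, σ, hσ, hc_lim⟩ :=
    isCompact_univ.tendsto_subseq fun k => mem_univ (zIter T (n k) (a' k))
  have hφc : φ c = z := by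
    refine tendsto_nhds_unique ((hc.tendsto c).comp hc_lim) ?_
    simpa only [Function.comp_def, zIter_semiconj T R hφT, ha'φ] using
      hun.comp hσ.tendsto_atTop
  obtain ⟨b, hbφ, hb⟩ := hz.exists_seq_tendsto hc hs hφc (hvn.comp hσ.tendsto_atTop)
  set x' : ℕ → X := fun k => zIter T (-n (σ k)) (b k)
  have hx'φ (k : ℕ) : φ (x' k) = v (σ k) := by
    simp only [x', zIter_semiconj T R hφT, hbφ, Function.comp_apply, zIter_neg_self]
  obtain ⟨x, -, τ, hτ, hx⟩ := isCompact_univ.tendsto_subseq fun k => mem_univ (x' k)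
  refine ⟨x, tendsto_nhds_unique ((hc.tendsto x).comp hx) ?_, ?_⟩
  · simpa only [Function.comp_def, hx'φ] using hv.comp (hσ.comp hτ).tendsto_atTop
  · refine ⟨a' ∘ σ ∘ τ, x' ∘ τ, n ∘ σ ∘ τ, ha'.comp (hσ.comp hτ).tendsto_atTop, hx, ?_⟩
    have h_back (k : ℕ) : zIter T (n (σ k)) (x' k) = b k := by
      rw [← neg_neg (n (σ k)), zIter_neg_self]
    simpa only [Function.comp_apply, h_back, dist_self] using
      (hc_lim.comp hτ.tendsto_atTop).dist (hb.comp hτ.tendsto_atTop)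

end Lifting

lemma IsJoining.preimage_prodMap {X Y Z : Type*} [TopologicalSpace X] [TopologicalSpace Y]
    [TopologicalSpace Z] {T : X ≃ₜ X} {S : Y ≃ₜ Y} {R : Z ≃ₜ Z} {J : Set (Z × Y)}
    (hJ : IsJoining R S J) {φ : X → Z} (hφ : IsFactorMap T R φ) :
    IsJoining T S (Prod.map φ id ⁻¹' J) := by
  obtain ⟨hJ_closed, hJ_inv, hJ_fst, hJ_snd⟩ := hJ
  obtain ⟨hc, hs, hφT⟩ := hφ
  refine ⟨hJ_closed.preimage (hc.prodMap continuous_id), ?_, ?_, ?_⟩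
  · have h_comm : Prod.map φ id ∘ T.prodCongr S = R.prodCongr S ∘ Prod.map φ id :=
      funext fun p => Prod.ext (hφT p.1) rfl
    refine ((preimage_eq_iff_eq_image (T.prodCongr S).bijective).1 ?_).symm
    rw [← preimage_comp, h_comm, preimage_comp,
      (preimage_eq_iff_eq_image (R.prodCongr S).bijective).2 hJ_inv.symm]
  · refine eq_univ_of_forall fun x => ?_
    obtain ⟨p, hpJ, hp⟩ := hJ_fst.symm ▸ mem_univ (φ x)
    exact ⟨(x, p.2), by simpa [← hp] using hpJ, rfl⟩
  · refine eq_univ_of_forall fun y => ?_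
    obtain ⟨p, hpJ, rfl⟩ := hJ_snd.symm ▸ mem_univ y
    obtain ⟨x, hx⟩ := hs p.1
    exact ⟨(x, p.2), by simpa [hx] using hpJ, rfl⟩

/-- The set of points whose regionally proximal cells meet `K` is closed and invariant, and by
minimality of `T` the orbit of the slice `{a} × Y` is dense. -/
lemma fullEqProjection_of_slice {X Y : Type*} [MetricSpace X] [MetricSpace Y] [CompactSpace X]
    [CompactSpace Y] {T : X ≃ₜ X} {S : Y ≃ₜ Y} (hT : IsMinimalSystem T) {K : Set (X × Y)}
    (hK_closed : IsClosed K) (hK_inv : (T.prodCongr S) '' K = K) {a : X}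
    (ha : ∀ y, ∃ p ∈ K, (a, p.1) ∈ RP T ∧ (y, p.2) ∈ RP S) : FullEqProjection T S K := by
  set Γ : Set ((X × Y) × (X × Y)) :=
    {q | q.2 ∈ K ∧ (q.1.1, q.2.1) ∈ RP T ∧ (q.1.2, q.2.2) ∈ RP S}
  have hΓ_closed : IsClosed Γ :=
    (hK_closed.preimage continuous_snd).inter
      (((isClosed_RP T).preimage (by fun_prop)).inter ((isClosed_RP S).preimage (by fun_prop)))
  have hΓ_inv (n : ℤ) {q} (hq : q ∈ Γ) :
      ((zIter T n q.1.1, zIter S n q.1.2), (zIter T n q.2.1, zIter S n q.2.2)) ∈ Γ :=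
    ⟨zIter_prodCongr T S n q.2 ▸ zIter_mem_of_image_eq _ hK_inv n hq.1,
      zIter_mem_RP T hq.2.1 n, zIter_mem_RP S hq.2.2 n⟩
  intro x y
  suffices h : {x | (x, y) ∈ Prod.fst '' Γ} = univ by
    obtain ⟨⟨_, p⟩, hp, rfl⟩ := h.symm ▸ mem_univ x
    exact ⟨p, hp⟩
  refine eq_univ_of_univ_subset <| (hT a).closure_eq ▸ closure_minimal ?_
    ((isClosedMap_fst_of_compactSpace _ hΓ_closed).preimage (by fun_prop))
  rintro _ ⟨n, rfl⟩
  obtain ⟨p, hpK, hap, hyp⟩ := ha (zIter S (-n) y)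
  refine ⟨_, hΓ_inv n (q := ((a, zIter S (-n) y), p)) ⟨hpK, hap, hyp⟩, ?_⟩
  simp only [← zIter_add, add_neg_cancel]
  rfl

theorem FullEqProjection.preimage_prodMap {X Y Z : Type*} [MetricSpace X] [CompactSpace X]
    [MetricSpace Y] [CompactSpace Y] [MetricSpace Z] [CompactSpace Z]
    {T : X ≃ₜ X} {S : Y ≃ₜ Y} {R : Z ≃ₜ Z} (hT : IsMinimalSystem T) (hR : IsMinimalSystem R)
    {φ : X → Z} (hφ : IsFactorMap T R φ) {J : Set (Z × Y)} (hJ : IsJoining R S J)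
    (hJ_eq : FullEqProjection R S J) : FullEqProjection T S (Prod.map φ id ⁻¹' J) := by
  intro x
  have : Nonempty Z := ⟨φ x⟩
  obtain ⟨z, hz⟩ := (dense_of_mem_residual
    (eventually_residual_isFiberContinuityPoint hφ.1 hφ.2.1)).nonempty
  obtain ⟨a, ha⟩ := hφ.2.1 z
  obtain ⟨hK_closed, hK_inv, -⟩ := hJ.preimage_prodMap hφ
  refine fullEqProjection_of_slice hT hK_closed hK_inv (a := a) (fun y => ?_) x
  obtain ⟨p, hpJ, hzp, hyp⟩ := hJ_eq z y
  obtain ⟨x', hx'φ, hax'⟩ := exists_lift_mem_RP hR hφ hz hzp ha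
  exact ⟨(x', p.2), show (φ x', p.2) ∈ J from hx'φ ▸ hpJ, hax', hyp⟩

theorem stmt11_general {X Y Z : Type*} [MetricSpace X] [CompactSpace X]
    [MetricSpace Y] [CompactSpace Y] [MetricSpace Z] [CompactSpace Z]
    (T : X ≃ₜ X) (S : Y ≃ₜ Y) (R : Z ≃ₜ Z)
    (hX : IsMinimalSystem T) (hZ : IsMinimalSystem R)
    (φ : X → Z) (hφ : IsFactorMap T R φ)
    (hQD : QuasiDisjoint T S) :
    QuasiDisjoint R S := by
  intro J hJ hJ_eq
  have h_pre : Prod.map φ id ⁻¹' J = Prod.map φ id ⁻¹' univ :=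
    hQD _ (hJ.preimage_prodMap hφ) (hJ_eq.preimage_prodMap hX hZ hφ hJ)
  exact (hφ.2.1.prodMap Function.surjective_id).preimage_injective h_pre

/-- quasi-disjointness passes to factors. -/
theorem stmt11 {X Y Z : Type*} [MetricSpace X] [CompactSpace X]
    [MetricSpace Y] [CompactSpace Y] [MetricSpace Z] [CompactSpace Z]
    (T : X ≃ₜ X) (S : Y ≃ₜ Y) (R : Z ≃ₜ Z)
    (hX : IsMinimalSystem T) (hY : IsMinimalSystem S) (hZ : IsMinimalSystem R)
    (φ : X → Z) (hφ : IsFactorMap T R φ)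
    (hQD : QuasiDisjoint T S) :
    QuasiDisjoint R S :=
  stmt11_general T S R hX hZ φ hφ hQD
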